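/- The adjoint action of Λ = ∑_{a=1}^{2n} c_a ⊗ c_a on tensor products of same-parity operators is given in the Grassmann representation by the differential operator Λ_ad = 2∑_a (θ_a ⊗ ∂/∂θ_a + ∂/∂θ_a ⊗ θ_a): for any Y, Z ∈ C_{2n} of the same parity (both even or both odd), ω([Λ, Y ⊗ Z]) = Λ_ad (ω(Y) ⊗ ω(Z)). -/

import Mathlib

set_option linter.unusedSectionVars false
set_option maxHeartbeats 1000000


open scoped BigOperators TensorProduct
open Matrix

/-- Grassmann algebra on variables indexed by `ι`. -/
abbrev GA (ι : Type*) := ExteriorAlgebra ℂ (ι → ℂ)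

/-- The Grassmann generator `θ_a`. -/
noncomputable def θv {ι : Type*} [DecidableEq ι] (a : ι) : GA ι :=
  ExteriorAlgebra.ι ℂ (Pi.single a 1)

/-- The partial derivative `∂/∂θ_a` (left interior product / Berezin integral `∫ dθ_a`). -/
noncomputable def pderiv (ι : Type*) [DecidableEq ι] (a : ι) : GA ι →ₗ[ℂ] GA ι :=
  CliffordAlgebra.contractLeft (Q := (0 : QuadraticForm ℂ (ι → ℂ))) (LinearMap.proj a)

/-- Berezin integration along a list of variables (first element integrated first). -/
noncomputable def berezinAlong {ι : Type*} [DecidableEq ι] (l : List ι) : GA ι →ₗ[ℂ] GA ι :=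
  l.foldl (fun acc a => pderiv ι a ∘ₗ acc) LinearMap.id

/-- Full Berezin integral `∫ Dθ = ∫dθ_n ⋯ ∫dθ_1`, normalized so that
`∫ Dθ θ_1⋯θ_n = 1` (the result of the operator is the coefficient of `θ_1⋯θ_n`,
viewed as a scalar inside the algebra). -/
noncomputable def berezin (n : ℕ) : GA (Fin n) →ₗ[ℂ] GA (Fin n) :=
  berezinAlong (List.ofFn (id : Fin n → Fin n))

/-- Exponential defined by its (finite, since arguments are nilpotent) Taylor series,
truncated after `N` terms. -/
noncomputable def gexp {A : Type*} [Ring A] [Algebra ℂ A] (N : ℕ) (x : A) : A :=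
  ∑ k ∈ Finset.range N, ((k.factorial : ℂ))⁻¹ • x ^ k

/-- The quadratic form `θᵀ M θ = ∑_{a,b} M_{ab} θ_a θ_b`. -/
noncomputable def quadform {n : ℕ} (M : Matrix (Fin n) (Fin n) ℂ) : GA (Fin n) :=
  ∑ a, ∑ b, M a b • (θv a * θv b)

/-- Left multiplication by the generator `θ_a`. -/
noncomputable def mulθ {ι : Type*} [DecidableEq ι] (a : ι) : GA ι →ₗ[ℂ] GA ι :=
  LinearMap.mulLeft ℂ (θv a)

/-- The differential operator `Λ_ad = 2∑_a (θ_a ⊗ ∂/∂θ_a + ∂/∂θ_a ⊗ θ_a)`. -/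
noncomputable def lambdaAd (n : ℕ) :
    GA (Fin n) ⊗[ℂ] GA (Fin n) →ₗ[ℂ] GA (Fin n) ⊗[ℂ] GA (Fin n) :=
  (2 : ℂ) • ∑ a : Fin n,
    (TensorProduct.map (mulθ a) (pderiv (Fin n) a)
      + TensorProduct.map (pderiv (Fin n) a) (mulθ a))

namespace Lam17
section Grass
variable {ι : Type*} [DecidableEq ι]

noncomputable def θL (l : List ι) : GA ι := (l.map θv).prod

@[simp] lemma θL_nil : θL ([] : List ι) = 1 := rfl
@[simp] lemma θL_cons (a : ι) (l : List ι) : θL (a :: l) = θv a * θL l := by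
  simp [θL]

lemma θ_anti (a b : ι) : θv a * θv b = -(θv b * θv a) := by
  have := ExteriorAlgebra.ι_add_mul_swap (R := ℂ) (Pi.single a (1:ℂ) : ι → ℂ) (Pi.single b 1)
  exact eq_neg_of_add_eq_zero_left this

@[simp] lemma θ_sq (a : ι) : θv a * θv a = 0 := ExteriorAlgebra.ι_sq_zero _

@[simp] lemma pd_one (a : ι) : pderiv ι a 1 = 0 := by
  exact CliffordAlgebra.contractLeft_one _ _

lemma pd_mul (a b : ι) (x : GA ι) :
    pderiv ι a (θv b * x) = (if a = b then x else 0) - θv b * pderiv ι a x := by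
  have := CliffordAlgebra.contractLeft_ι_mul (Q := (0 : QuadraticForm ℂ (ι → ℂ)))
    (d := LinearMap.proj a) (Pi.single b (1:ℂ)) x
  simpa [pderiv, θv, Pi.single_apply] using this

lemma pd_nmem (a : ι) : ∀ l : List ι, a ∉ l → pderiv ι a (θL l) = 0 := by
  intro l
  induction l with
  | nil => simp
  | cons b t ih =>
    intro h
    simp only [List.mem_cons, not_or] at h
    rw [θL_cons, pd_mul, if_neg (fun hba => h.1 hba), ih h.2, mul_zero, sub_zero]

lemma θmul_mem (a : ι) : ∀ l : List ι, a ∈ l → θv a * θL l = 0 := by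
  intro l
  induction l with
  | nil => simp
  | cons b t ih =>
    intro h
    rcases List.mem_cons.mp h with h | h
    · subst h; rw [θL_cons, ← mul_assoc, θ_sq, zero_mul]
    · rw [θL_cons, ← mul_assoc, θ_anti, neg_mul, mul_assoc, ih h, mul_zero, neg_zero]

lemma involute_θL (l : List ι) :
    CliffordAlgebra.involute (θL l) = ((-1:ℂ)) ^ l.length • θL l := by
  induction l with
  | nil => simp
  | cons b t ih =>
    rw [θL_cons, _root_.map_mul, ih]
    have hb : CliffordAlgebra.involute (θv b) = -θv b := by
      simpa [θv] using CliffordAlgebra.involute_ι (Q := (0 : QuadraticForm ℂ (ι → ℂ)))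
        (Pi.single b (1:ℂ))
    rw [hb, List.length_cons, pow_succ, Algebra.mul_smul_comm, neg_mul, mul_comm, mul_smul]
    simp


variable {A : Type*} [Ring A] [Algebra ℂ A]

end Grass

section Cliff
variable {ι : Type*} [LinearOrder ι] [DecidableEq ι] {A : Type*} [Ring A] [Algebra ℂ A]

noncomputable def cL (c : ι → A) (l : List ι) : A := (l.map c).prod

@[simp] lemma cL_nil (c : ι → A) : cL c ([] : List ι) = 1 := rfl
@[simp] lemma cL_cons (c : ι → A) (a : ι) (l : List ι) : cL c (a :: l) = c a * cL c l := by
  simp [cL]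

variable {c : ι → A} (hrel : ∀ a b, c a * c b + c b * c a = if a = b then 2 else 0)

include hrel

lemma csq (a : ι) : c a * c a = 1 := by
  have h := hrel a a
  rw [if_pos rfl] at h
  have h2 : (2:ℂ) • (c a * c a) = (2:ℂ) • (1:A) := by
    rw [two_smul, two_smul, h]
    rw [← one_add_one_eq_two]
  have := smul_right_injective A (by norm_num : (2:ℂ) ≠ 0) h2
  exact this

lemma canti {a b : ι} (h : a ≠ b) : c a * c b = -(c b * c a) := by
  have h' := hrel a b
  rw [if_neg h] at h'
  exact eq_neg_of_add_eq_zero_left h'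

lemma comm_list (a : ι) : ∀ l : List ι,
    c a * cL c l = ((-1:ℂ)) ^ (l.countP (fun b => decide (b ≠ a))) • (cL c l * c a) := by
  intro l
  induction l with
  | nil => simp
  | cons b t ih =>
    rw [cL_cons, List.countP_cons]
    by_cases hba : b = a
    · rw [show (if (b ≠ a : Bool) = true then 1 else 0) = 0 by simp [hba], add_zero, hba]
      rw [mul_assoc, ih, Algebra.mul_smul_comm]
    · have a_ne : a ≠ b := Ne.symm hba
      rw [show (if (b ≠ a : Bool) = true then 1 else 0) = 1 by simp [hba], pow_succ]
      rw [← mul_assoc, canti hrel a_ne, neg_mul, mul_assoc, ih, Algebra.mul_smul_comm]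
      rw [← mul_assoc]
      rw [mul_comm ((-1:ℂ) ^ t.countP _) (-1), mul_smul]
      simp



lemma key (a : ι) : ∀ l : List ι, l.Pairwise (· < ·) →
    ∃ (s : ℂ) (l' : List ι), l'.Pairwise (· < ·) ∧ (s = 1 ∨ s = -1) ∧
      l'.toFinset = (if a ∈ l then l.toFinset.erase a else insert a l.toFinset) ∧
      c a * cL c l = s • cL c l' ∧
      (mulθ a + pderiv ι a) (θL l) = s • θL l' := by
  intro l
  induction l with
  | nil =>
    intro _
    refine ⟨1, [a], List.pairwise_singleton _ a, Or.inl rfl, by simp, by simp [cL], ?_⟩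
    simp [mulθ, θL]
  | cons b t ih =>
    intro hl
    obtain ⟨hbt, hts⟩ := List.pairwise_cons.mp hl
    rcases lt_trichotomy a b with hab | hab | hab
    · -- a < b
      have hnot : a ∉ b :: t := by
        intro h
        rcases List.mem_cons.mp h with h | h
        · exact absurd h (ne_of_lt hab)
        · exact absurd hab (not_lt.mpr (le_of_lt (hbt a h)))
      refine ⟨1, a :: b :: t, ?_, Or.inl rfl, ?_, by simp, ?_⟩
      · refine List.pairwise_cons.mpr ⟨?_, hl⟩
        intro x hx
        rcases List.mem_cons.mp hx with hx | hx
        · exact hx ▸ hab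
        · exact hab.trans (hbt x hx)
      · rw [if_neg hnot, List.toFinset_cons]
      · rw [one_smul, LinearMap.add_apply, pd_nmem a _ hnot, add_zero, θL_cons]
        rfl
    · -- a = b
      subst hab
      have hat : a ∉ t := fun h => lt_irrefl a (hbt a h)
      refine ⟨1, t, hts, Or.inl rfl, ?_, ?_, ?_⟩
      · rw [if_pos (List.mem_cons_self (a := a) (l := t)), List.toFinset_cons,
          Finset.erase_insert (by simpa using hat)]
      · rw [cL_cons, ← mul_assoc, csq hrel, one_mul, one_smul]
      · simp only [one_smul, LinearMap.add_apply, mulθ, LinearMap.mulLeft_apply]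
        rw [θL_cons, ← mul_assoc, θ_sq, zero_mul, zero_add,
          pd_mul, if_pos rfl, pd_nmem a t hat, mul_zero, sub_zero]
    · -- b < a
      obtain ⟨s, l', hsort', hs, hfin, hmat, hgr⟩ := ih hts
      have hanb : a ≠ b := ne_of_gt hab
      have hmem' : ∀ x ∈ l', b < x := by
        intro x hx
        have hx' : x ∈ l'.toFinset := List.mem_toFinset.mpr hx
        rw [hfin] at hx'
        by_cases hat : a ∈ t
        · rw [if_pos hat] at hx'
          exact hbt x (List.mem_toFinset.mp (Finset.mem_of_mem_erase hx'))
        · rw [if_neg hat] at hx'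
          rcases Finset.mem_insert.mp hx' with hx' | hx'
          · exact hx' ▸ hab
          · exact hbt x (List.mem_toFinset.mp hx')
      refine ⟨-s, b :: l', List.pairwise_cons.mpr ⟨hmem', hsort'⟩, ?_, ?_, ?_, ?_⟩
      · rcases hs with hs | hs <;> rw [hs] <;> simp
      · rw [List.toFinset_cons, hfin]
        by_cases hat : a ∈ t
        · rw [if_pos hat, if_pos (List.mem_cons_of_mem b hat), List.toFinset_cons]
          ext x
          by_cases hxa : x = a <;> simp [hxa, hanb.symm, Finset.mem_erase, Finset.mem_insert]
          tauto
        · have hnot : a ∉ b :: t := by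
            intro h
            rcases List.mem_cons.mp h with h | h
            · exact hanb h
            · exact hat h
          rw [if_neg hat, if_neg hnot, List.toFinset_cons, Finset.insert_comm]
      · rw [cL_cons, ← mul_assoc, canti hrel hanb, neg_mul, mul_assoc, hmat,
          Algebra.mul_smul_comm, cL_cons, ← neg_smul]
      · have hgr' : θv a * θL t + pderiv ι a (θL t) = s • θL l' := by
          simpa [mulθ, LinearMap.mulLeft_apply] using hgr
        simp only [LinearMap.add_apply, mulθ, LinearMap.mulLeft_apply]
        rw [θL_cons, pd_mul, if_neg hanb, zero_sub, ← mul_assoc,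
          θ_anti, neg_mul, mul_assoc]
        show -(θv b * (θv a * θL t)) + -(θv b * pderiv ι a (θL t)) = (-s) • θL (b :: l')
        rw [← neg_add, ← mul_add, hgr', Algebra.mul_smul_comm, ← neg_smul, θL_cons]

end Cliff

section FinsetLevel
variable {ι : Type*} [LinearOrder ι] [DecidableEq ι] {A : Type*} [Ring A] [Algebra ℂ A]

noncomputable def cS (c : ι → A) (S : Finset ι) : A := cL c (S.sort (· ≤ ·))
noncomputable def θS (S : Finset ι) : GA ι := θL (S.sort (· ≤ ·))

@[simp] lemma cS_empty (c : ι → A) : cS c ∅ = 1 := by simp [cS, cL]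

lemma finhelp {a : ι} {T S : Finset ι} (ha : a ∉ T) :
    symmDiff (insert a T) S = if a ∈ symmDiff T S then (symmDiff T S).erase a else insert a (symmDiff T S) := by
  by_cases haS : a ∈ S
  · rw [if_pos (Finset.mem_symmDiff.mpr (Or.inr ⟨haS, ha⟩))]
    ext x
    by_cases hxa : x = a
    · subst hxa
      simp [Finset.mem_symmDiff, haS]
    · simp only [Finset.mem_symmDiff, Finset.mem_erase, Finset.mem_insert, hxa]
      tauto
  · rw [if_neg (by simp [Finset.mem_symmDiff, haS, ha])]
    ext x
    by_cases hxa : x = a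
    · subst hxa
      simp [Finset.mem_symmDiff, haS, ha]
    · simp only [Finset.mem_symmDiff, Finset.mem_erase, Finset.mem_insert, hxa]
      tauto

variable {c : ι → A} (hrel : ∀ a b, c a * c b + c b * c a = if a = b then 2 else 0)
include hrel

lemma keyS (a : ι) (S : Finset ι) :
    ∃ s : ℂ, (s = 1 ∨ s = -1) ∧
      c a * cS c S = s • cS c (if a ∈ S then S.erase a else insert a S) ∧
      (mulθ a + pderiv ι a) (θS S) = s • θS (if a ∈ S then S.erase a else insert a S) := by
  obtain ⟨s, l', h1, h2, h3, h4, h5⟩ := key hrel a (S.sort (· ≤ ·)) (Finset.sortedLT_sort S).pairwise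
  have hfin : l'.toFinset = (if a ∈ S then S.erase a else insert a S) := by
    simpa [Finset.sort_toFinset, Finset.mem_sort] using h3
  have hl' : l'.toFinset.sort (· ≤ ·) = l' :=
    (List.toFinset_sort _ h1.sortedLT.nodup).mpr (h1.imp le_of_lt)
  refine ⟨s, h2, ?_, ?_⟩
  · rw [cS, cS, h4, ← hfin, hl']
  · rw [θS, θS, h5, ← hfin, hl']

lemma mul_cS : ∀ (l : List ι), l.Nodup → ∀ S : Finset ι,
    ∃ s : ℂ, (s = 1 ∨ s = -1) ∧ cL c l * cS c S = s • cS c (symmDiff l.toFinset S) := by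
  intro l
  induction l with
  | nil => intro _ S; exact ⟨1, Or.inl rfl, by simp [← Finset.bot_eq_empty, bot_symmDiff]⟩
  | cons a t ih =>
    intro hnd S
    obtain ⟨hat, hndt⟩ := List.nodup_cons.mp hnd
    obtain ⟨s, hs, hmul⟩ := ih hndt S
    obtain ⟨s', hs', hmul', -⟩ := keyS hrel a (symmDiff t.toFinset S)
    refine ⟨s * s', ?_, ?_⟩
    · rcases hs with h | h <;> rcases hs' with h' | h' <;> simp [h, h']
    · rw [cL_cons, mul_assoc, hmul, Algebra.mul_smul_comm, hmul', smul_smul,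
        List.toFinset_cons, finhelp (by simpa using hat)]

end FinsetLevel

section Count
variable {ι : Type*} [DecidableEq ι]

lemma countP_ne (a : ι) : ∀ l : List ι, l.Nodup →
    l.countP (fun b => decide (b ≠ a)) = l.length - (if a ∈ l then 1 else 0) := by
  intro l
  induction l with
  | nil => simp
  | cons b t ih =>
    intro hnd
    obtain ⟨hbt, hndt⟩ := List.nodup_cons.mp hnd
    rw [List.countP_cons, ih hndt]
    by_cases hba : b = a
    · have hat : a ∉ t := hba ▸ hbt
      simp only [hba, List.length_cons, List.mem_cons, true_or, if_pos, hat, if_neg,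
        not_false_iff, ite_false, ite_true]
      simp [hat]
    · have hmem : (a ∈ b :: t) ↔ (a ∈ t) := by simp [Ne.symm hba]
      by_cases hat : a ∈ t
      · have hpos := List.length_pos_of_mem hat
        simp [hmem, hat, hba] <;> omega
      · simp [hmem, hat, hba] <;> omega

end Count

section Mat
variable {n : ℕ} {κ : Type*} [Fintype κ] [DecidableEq κ]
variable {c : Fin (2*n) → Matrix κ κ ℂ}
variable (hrel : ∀ a b, c a * c b + c b * c a = if a = b then 2 else 0)
include hrel

lemma trace_cS_eq_zero {S : Finset (Fin (2*n))} (hS : S.Nonempty) : (cS c S).trace = 0 := by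
  have hchoice : ∃ a : Fin (2*n),
      Odd ((S.sort (· ≤ ·)).countP (fun b => decide (b ≠ a))) := by
    by_cases hpar : Even S.card
    · have h1 : 1 ≤ S.card := Finset.card_pos.mpr hS
      obtain ⟨a, ha⟩ := hS
      refine ⟨a, ?_⟩
      rw [countP_ne a _ (Finset.sort_nodup _ _), Finset.length_sort,
        if_pos ((Finset.mem_sort _).mpr ha)]
      obtain ⟨k, hk⟩ := hpar
      exact ⟨k - 1, by omega⟩
    · have hne : S ≠ Finset.univ := by
        intro h
        apply hpar
        rw [h, Finset.card_univ, Fintype.card_fin]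
        exact even_two_mul n
      have hex : ∃ a, a ∉ S := by
        by_contra hcon
        push_neg at hcon
        exact hne (Finset.eq_univ_iff_forall.mpr hcon)
      obtain ⟨a, ha⟩ := hex
      refine ⟨a, ?_⟩
      rw [countP_ne a _ (Finset.sort_nodup _ _), Finset.length_sort,
        if_neg (fun h => ha ((Finset.mem_sort _).mp h))]
      rw [Nat.sub_zero]
      exact Nat.odd_iff.mpr (by
        rcases Nat.even_or_odd S.card with h | h
        · exact absurd h hpar
        · exact Nat.odd_iff.mp h)
  obtain ⟨a, ha⟩ := hchoice
  set k := (S.sort (· ≤ ·)).countP (fun b => decide (b ≠ a)) with hkdef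
  have h1 : c a * cS c S = ((-1:ℂ))^k • (cS c S * c a) := by
    unfold cS
    exact comm_list hrel a (S.sort (· ≤ ·))
  have h2 : (c a * cS c S) * c a = ((-1:ℂ))^k • cS c S := by
    rw [h1, smul_mul_assoc, mul_assoc, csq hrel, mul_one]
  have h3 : (cS c S).trace = ((-1:ℂ))^k • (cS c S).trace := by
    calc (cS c S).trace = ((c a * c a) * cS c S).trace := by rw [csq hrel, one_mul]
      _ = ((c a * cS c S) * c a).trace := by
          rw [mul_assoc]; exact Matrix.trace_mul_comm (c a) (c a * cS c S)
      _ = ((-1:ℂ))^k • (cS c S).trace := by rw [h2, Matrix.trace_smul]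
  rw [ha.neg_one_pow] at h3
  have h3' : (cS c S).trace = -(cS c S).trace := by simpa using h3
  linear_combination h3' / 2

lemma trace_pair {T S : Finset (Fin (2*n))} (hTS : T ≠ S) : (cS c T * cS c S).trace = 0 := by
  obtain ⟨s, hs, hmul⟩ := mul_cS hrel (T.sort (· ≤ ·)) (Finset.sort_nodup _ _) S
  have h1 : cS c T * cS c S = s • cS c (symmDiff T S) := by
    simpa [cS, Finset.sort_toFinset] using hmul
  have h2 : (symmDiff T S).Nonempty := by
    rw [Finset.nonempty_iff_ne_empty]
    intro h
    exact hTS (symmDiff_eq_bot.mp (by rw [← Finset.bot_eq_empty] at h; exact h))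
  rw [h1, Matrix.trace_smul, trace_cS_eq_zero hrel h2, smul_zero]

lemma trace_self (T : Finset (Fin (2*n))) :
    ∃ s : ℂ, (s = 1 ∨ s = -1) ∧ (cS c T * cS c T).trace = s * (Fintype.card κ) := by
  obtain ⟨s, hs, hmul⟩ := mul_cS hrel (T.sort (· ≤ ·)) (Finset.sort_nodup _ _) T
  have h1 : cS c T * cS c T = s • cS c (symmDiff T T) := by
    simpa [cS, Finset.sort_toFinset] using hmul
  refine ⟨s, hs, ?_⟩
  rw [h1, symmDiff_self, Finset.bot_eq_empty, cS_empty, Matrix.trace_smul, Matrix.trace_one]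
  simp [smul_eq_mul]

lemma span_top (hκ : Fintype.card κ = 2^n) :
    Submodule.span ℂ (Set.range (cS c)) = ⊤ := by
  have hκ0 : (Fintype.card κ : ℂ) ≠ 0 := by
    rw [hκ]
    exact_mod_cast (by positivity : (0:ℕ) < 2^n).ne'
  have hli : LinearIndependent ℂ (cS c : Finset (Fin (2*n)) → Matrix κ κ ℂ) := by
    rw [Fintype.linearIndependent_iff]
    intro g hg T
    have h0 : (cS c T * ∑ S, g S • cS c S).trace = 0 := by
      rw [hg, mul_zero, Matrix.trace_zero]
    rw [Finset.mul_sum, Matrix.trace_sum] at h0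
    have h1 : ∀ S ∈ Finset.univ, S ≠ T → (cS c T * (g S • cS c S)).trace = 0 := by
      intro S _ hST
      rw [Matrix.mul_smul, Matrix.trace_smul, trace_pair hrel (Ne.symm hST), smul_zero]
    rw [Finset.sum_eq_single T h1 (by simp)] at h0
    obtain ⟨s, hs, htr⟩ := trace_self hrel T
    have hsne : s ≠ 0 := by rcases hs with h | h <;> rw [h] <;> norm_num
    rw [Matrix.mul_smul, Matrix.trace_smul, htr, smul_eq_mul] at h0
    exact (mul_eq_zero.mp h0).resolve_right (mul_ne_zero hsne hκ0)
  apply hli.span_eq_top_of_card_eq_finrank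
  rw [Fintype.card_finset, Fintype.card_fin, Module.finrank_matrix, hκ,
    Module.finrank_self, mul_one, ← pow_add, two_mul]

end Mat

section Omega
variable {n : ℕ} {κ : Type*} [Fintype κ] [DecidableEq κ]
variable {c : Fin (2*n) → Matrix κ κ ℂ}
variable (hrel : ∀ a b, c a * c b + c b * c a = if a = b then 2 else 0)
variable {ω : Matrix κ κ ℂ →ₗ[ℂ] GA (Fin (2*n))}
variable (hω : ∀ S : Finset (Fin (2*n)), ω (cS c S) = θS S)

include hrel hω

lemma first_mono (a : Fin (2*n)) (S : Finset (Fin (2*n))) :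
    ω (c a * cS c S) = (mulθ a + pderiv (Fin (2*n)) a) (θS S) := by
  obtain ⟨s, _, hm, hg⟩ := keyS hrel a S
  rw [hm, _root_.map_smul, hω, hg]

lemma omega_first (hκ : Fintype.card κ = 2^n) (a : Fin (2*n)) (Y : Matrix κ κ ℂ) :
    ω (c a * Y) = (mulθ a + pderiv (Fin (2*n)) a) (ω Y) := by
  have hs := span_top hrel hκ
  have heq : (ω ∘ₗ LinearMap.mulLeft ℂ (c a))
      = ((mulθ a + pderiv (Fin (2*n)) a) ∘ₗ ω) := by
    apply LinearMap.ext_on hs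
    rintro x ⟨S, rfl⟩
    simp only [LinearMap.comp_apply, LinearMap.mulLeft_apply]
    rw [first_mono hrel hω, hω]
  exact LinearMap.congr_fun heq Y

lemma second_mono (a : Fin (2*n)) (S : Finset (Fin (2*n))) :
    ω (cS c S * c a)
      = (mulθ a - pderiv (Fin (2*n)) a) (CliffordAlgebra.involute (θS S)) := by
  set l := S.sort (· ≤ ·) with hldef
  set k := l.countP (fun b => decide (b ≠ a)) with hkdef
  have hc : c a * cS c S = ((-1:ℂ))^k • (cS c S * c a) := by
    unfold cS
    exact comm_list hrel a l
  have hc' : cS c S * c a = ((-1:ℂ))^k • (c a * cS c S) := by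
    rw [hc, smul_smul, ← mul_pow]
    norm_num
  have hL : ω (c a * cS c S) = θv a * θS S + pderiv (Fin (2*n)) a (θS S) := by
    rw [first_mono hrel hω]
    simp [mulθ, LinearMap.mulLeft_apply]
  have hk : k = l.length - (if a ∈ l then 1 else 0) := countP_ne a l (Finset.sort_nodup _ _)
  have hinv : CliffordAlgebra.involute (θS S) = ((-1:ℂ))^(l.length) • θS S := involute_θL l
  rw [hc', _root_.map_smul, hL, hinv, _root_.map_smul]
  have hsub : (mulθ a - pderiv (Fin (2*n)) a) (θS S)
      = θv a * θS S - pderiv (Fin (2*n)) a (θS S) := by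
    simp [mulθ, LinearMap.mulLeft_apply]
  rw [hsub]
  by_cases hmem : a ∈ l
  · have hz : θv a * θS S = 0 := θmul_mem a l hmem
    have hlen : 1 ≤ l.length := List.length_pos_of_mem hmem
    rw [hz, zero_add, zero_sub, smul_neg, hk, if_pos hmem]
    rw [show l.length = (l.length - 1) + 1 by omega]
    rw [pow_succ]
    simp only [Nat.add_sub_cancel]
    module
  · have hz : pderiv (Fin (2*n)) a (θS S) = 0 := pd_nmem a l hmem
    rw [hz, add_zero, sub_zero, hk, if_neg hmem, Nat.sub_zero]

lemma omega_second (hκ : Fintype.card κ = 2^n) (a : Fin (2*n)) (Y : Matrix κ κ ℂ) :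
    ω (Y * c a)
      = (mulθ a - pderiv (Fin (2*n)) a) (CliffordAlgebra.involute (ω Y)) := by
  have hs := span_top hrel hκ
  have heq : (ω ∘ₗ LinearMap.mulRight ℂ (c a))
      = ((mulθ a - pderiv (Fin (2*n)) a) ∘ₗ
          ((CliffordAlgebra.involute (Q := (0 : QuadraticForm ℂ (Fin (2*n) → ℂ)))).toLinearMap
            ∘ₗ ω)) := by
    apply LinearMap.ext_on hs
    rintro x ⟨S, rfl⟩
    simp only [LinearMap.comp_apply, LinearMap.mulRight_apply, AlgHom.toLinearMap_apply]
    rw [second_mono hrel hω, hω]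
  exact LinearMap.congr_fun heq Y

end Omega

lemma expand4 {ι : Type*} [DecidableEq ι] (x y z w : GA ι) :
    (x + y) ⊗ₜ[ℂ] (z + w) - (x - y) ⊗ₜ[ℂ] (z - w)
      = (2:ℂ) • (x ⊗ₜ[ℂ] w + y ⊗ₜ[ℂ] z) := by
  simp only [TensorProduct.tmul_add, TensorProduct.tmul_sub, TensorProduct.add_tmul,
    TensorProduct.sub_tmul, smul_add, two_smul]
  abel

end Lam17

/-- in the Grassmann representation, the adjoint action of
`Λ = ∑_a c_a ⊗ c_a` on tensor products of same-parity operators is given by the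
differential operator `Λ_ad`: for `Y, Z` of the same parity,
`ω([Λ, Y ⊗ Z]) = Λ_ad (ω(Y) ⊗ ω(Z))`. -/
theorem lambda_adjoint_action {n : ℕ}
    (c : Fin (2*n) → Matrix (Fin (2^n)) (Fin (2^n)) ℂ)
    (hrel : ∀ a b, c a * c b + c b * c a = if a = b then 2 else 0)
    (ω : Matrix (Fin (2^n)) (Fin (2^n)) ℂ →ₗ[ℂ] GA (Fin (2*n)))
    (hω : ∀ S : Finset (Fin (2*n)),
      ω ((S.sort (· ≤ ·) |>.map c).prod) = (S.sort (· ≤ ·) |>.map θv).prod)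
    (Y Z : Matrix (Fin (2^n)) (Fin (2^n)) ℂ)
    (hpar : ∃ p : ZMod 2,
      ω Y ∈ CliffordAlgebra.evenOdd (0 : QuadraticForm ℂ (Fin (2*n) → ℂ)) p ∧
      ω Z ∈ CliffordAlgebra.evenOdd (0 : QuadraticForm ℂ (Fin (2*n) → ℂ)) p) :
    TensorProduct.map ω ω
        ((∑ a, c a ⊗ₜ[ℂ] c a) * (Y ⊗ₜ[ℂ] Z) - (Y ⊗ₜ[ℂ] Z) * (∑ a, c a ⊗ₜ[ℂ] c a))
      = lambdaAd (2*n) ((ω Y) ⊗ₜ[ℂ] (ω Z)) := by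
  obtain ⟨p, hY, hZ⟩ := hpar
  have hω' : ∀ S : Finset (Fin (2*n)), ω (Lam17.cS c S) = Lam17.θS S := fun S => hω S
  have hκ : Fintype.card (Fin (2^n)) = 2^n := Fintype.card_fin _
  have h1 : ∀ a, ω (c a * Y) = mulθ a (ω Y) + pderiv (Fin (2*n)) a (ω Y) := by
    intro a
    rw [Lam17.omega_first hrel hω' hκ a Y, LinearMap.add_apply]
  have h1' : ∀ a, ω (c a * Z) = mulθ a (ω Z) + pderiv (Fin (2*n)) a (ω Z) := by
    intro a
    rw [Lam17.omega_first hrel hω' hκ a Z, LinearMap.add_apply]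
  have h2 : ∀ a, ω (Y * c a)
      = (mulθ a - pderiv (Fin (2*n)) a) (CliffordAlgebra.involute (ω Y)) :=
    fun a => Lam17.omega_second hrel hω' hκ a Y
  have h2' : ∀ a, ω (Z * c a)
      = (mulθ a - pderiv (Fin (2*n)) a) (CliffordAlgebra.involute (ω Z)) :=
    fun a => Lam17.omega_second hrel hω' hκ a Z
  have hterm : ∀ a, ω (Y * c a) ⊗ₜ[ℂ] ω (Z * c a)
      = (mulθ a (ω Y) - pderiv (Fin (2*n)) a (ω Y)) ⊗ₜ[ℂ]
        (mulθ a (ω Z) - pderiv (Fin (2*n)) a (ω Z)) := by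
    intro a
    rw [h2 a, h2' a]
    have hp01 : p = 0 ∨ p = 1 := by
      have : ∀ q : ZMod 2, q = 0 ∨ q = 1 := by decide
      exact this p
    rcases hp01 with hp | hp
    · subst hp
      rw [CliffordAlgebra.involute_eq_of_mem_even hY,
        CliffordAlgebra.involute_eq_of_mem_even hZ]
      simp only [LinearMap.sub_apply]
    · subst hp
      rw [CliffordAlgebra.involute_eq_of_mem_odd hY,
        CliffordAlgebra.involute_eq_of_mem_odd hZ]
      rw [map_neg, map_neg]
      simp only [LinearMap.sub_apply]
      rw [TensorProduct.neg_tmul, TensorProduct.tmul_neg, neg_neg]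
  have hmul1 : (∑ a, c a ⊗ₜ[ℂ] c a) * (Y ⊗ₜ[ℂ] Z) = ∑ a, (c a * Y) ⊗ₜ[ℂ] (c a * Z) := by
    rw [Finset.sum_mul]
    exact Finset.sum_congr rfl fun a _ => Algebra.TensorProduct.tmul_mul_tmul _ _ _ _
  have hmul2 : (Y ⊗ₜ[ℂ] Z) * (∑ a, c a ⊗ₜ[ℂ] c a) = ∑ a, (Y * c a) ⊗ₜ[ℂ] (Z * c a) := by
    rw [Finset.mul_sum]
    exact Finset.sum_congr rfl fun a _ => Algebra.TensorProduct.tmul_mul_tmul _ _ _ _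
  rw [hmul1, hmul2, map_sub, map_sum, map_sum]
  simp only [TensorProduct.map_tmul]
  rw [← Finset.sum_sub_distrib]
  have hpoint : ∀ a : Fin (2*n),
      ω (c a * Y) ⊗ₜ[ℂ] ω (c a * Z) - ω (Y * c a) ⊗ₜ[ℂ] ω (Z * c a)
        = (2:ℂ) • (mulθ a (ω Y) ⊗ₜ[ℂ] pderiv (Fin (2*n)) a (ω Z)
            + pderiv (Fin (2*n)) a (ω Y) ⊗ₜ[ℂ] mulθ a (ω Z)) := by
    intro a
    rw [h1 a, h1' a, hterm a]
    exact Lam17.expand4 _ _ _ _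
  rw [Finset.sum_congr rfl fun a _ => hpoint a]
  rw [← Finset.smul_sum]
  unfold lambdaAd
  rw [LinearMap.smul_apply, LinearMap.sum_apply]
  simp only [LinearMap.add_apply, TensorProduct.map_tmul]
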